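/- Entropy dissipation identity: for a strictly positive pmf p with finite entropy sums, ∑_{n≥0} L[p]_n·log p_n = -∑_{n≥0}(r̄·p_n - p_{n+1})·(log(r̄·p_n) - log p_{n+1}), where r̄ = 1 - p_0 ∈ (0,1). In particular ∑ L[p]_n·log p_n ≤ 0. -/

import Mathlib

/-- The unbiased-exchange operator. -/
noncomputable def Lop (p : ℕ → ℝ) : ℕ → ℝ := fun n : ℕ =>
  if n = 0 then p 1 - (1 - p 0) * p 0
  else p (n + 1) + (1 - p 0) * p (n - 1) - (1 + (1 - p 0)) * p n

/-!
Writing `a n = (1 - p 0) * p n - p (n + 1)` for the flux from site `n` to site `n + 1`, the operator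
is a discrete divergence, `Lop p 0 = -a 0` and `Lop p (n + 1) = a n - a (n + 1)`, so summation by
parts turns `∑ Lop p n * log (p n)` into `∑ a n * (log (p (n + 1)) - log (p n))` up to the boundary
term `a N * log (p (N + 1))`. Since `∑ a n = 0`, the factor `1 - p 0` can be moved into the logarithm
at no cost. The boundary term has a limit because every other series
converges, and that limit is `0`: depending on the sign of `a N`, either `|a N| ≤ p N` or
`|a N| ≤ p (N + 1)`, and `x * log x → 0` as `x → 0`. Each summand of the right-hand side is
`0 ≤ (x - y) * (log x - log y)`, whence the sign.
-/

open Filter Topology Finset Real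

section SummationByParts

variable {a L u : ℕ → ℝ}

theorem sum_range_succ_mul_sub_flux_mul (hL0 : L 0 = -a 0) (hL : ∀ n, L (n + 1) = a n - a (n + 1))
    (N : ℕ) :
    ∑ n ∈ range (N + 1), (L n * u n - a n * (u (n + 1) - u n)) = -(a N * u (N + 1)) := by
  induction N with
  | zero => simp only [zero_add, sum_range_one, hL0]; ring
  | succ N ih => rw [sum_range_succ, ih, hL]; ring

theorem tendsto_flux_mul_succ (hL0 : L 0 = -a 0) (hL : ∀ n, L (n + 1) = a n - a (n + 1))
    (hLu : Summable fun n => L n * u n) (hau : Summable fun n => a n * (u (n + 1) - u n)) :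
    Tendsto (fun N => a N * u (N + 1)) atTop
      (𝓝 (∑' n, a n * (u (n + 1) - u n) - ∑' n, L n * u n)) := by
  have hsum := ((hLu.sub hau).hasSum.tendsto_sum_nat.comp (tendsto_add_atTop_nat 1)).neg
  simp only [Function.comp_def, sum_range_succ_mul_sub_flux_mul hL0 hL, neg_neg] at hsum
  rwa [hLu.tsum_sub hau, neg_sub] at hsum

theorem tendsto_flux_mul (hL0 : L 0 = -a 0) (hL : ∀ n, L (n + 1) = a n - a (n + 1))
    (hLu : Summable fun n => L n * u n) (hau : Summable fun n => a n * (u (n + 1) - u n)) :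
    Tendsto (fun N => a N * u N) atTop
      (𝓝 (∑' n, a n * (u (n + 1) - u n) - ∑' n, L n * u n)) := by
  have h := (tendsto_flux_mul_succ hL0 hL hLu hau).sub hau.tendsto_atTop_zero
  simp only [sub_zero] at h
  exact h.congr fun N => by ring

end SummationByParts

theorem min_abs_mul_log_le {r x y : ℝ} (hr0 : 0 ≤ r) (hr1 : r ≤ 1) (hx : 0 ≤ x) (hy : 0 ≤ y) :
    min |(r * x - y) * log x| |(r * x - y) * log y| ≤ |x * log x| + |y * log y| := by
  rw [abs_mul, abs_mul, abs_mul x, abs_mul y, abs_of_nonneg hx, abs_of_nonneg hy]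
  rcases le_total 0 (r * x - y) with h | h
  · have hxy : |r * x - y| ≤ x := by rw [abs_of_nonneg h]; nlinarith
    calc _ ≤ |r * x - y| * |log x| := min_le_left _ _
      _ ≤ x * |log x| := by gcongr
      _ ≤ _ := le_add_of_nonneg_right (by positivity)
  · have hxy : |r * x - y| ≤ y := by rw [abs_of_nonpos h]; nlinarith
    calc _ ≤ |r * x - y| * |log y| := min_le_right _ _
      _ ≤ y * |log y| := by gcongr
      _ ≤ _ := le_add_of_nonneg_left (by positivity)

theorem eq_zero_of_tendsto_flux_mul_log {p : ℕ → ℝ} {r ℓ : ℝ} (hp : ∀ n, 0 ≤ p n) (hr0 : 0 ≤ r)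
    (hr1 : r ≤ 1) (hp0 : Tendsto p atTop (𝓝 0))
    (hcur : Tendsto (fun n => (r * p n - p (n + 1)) * log (p n)) atTop (𝓝 ℓ))
    (hnext : Tendsto (fun n => (r * p n - p (n + 1)) * log (p (n + 1))) atTop (𝓝 ℓ)) :
    ℓ = 0 := by
  have hplogp : Tendsto (fun n => |p n * log (p n)|) atTop (𝓝 0) := by
    simpa using (continuous_mul_log.tendsto 0).comp hp0 |>.abs
  have hbound := hplogp.add (hplogp.comp (tendsto_add_atTop_nat 1))
  rw [add_zero] at hbound
  have hmin := hcur.abs.min hnext.abs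
  rw [min_self] at hmin
  exact abs_nonpos_iff.mp <| le_of_tendsto_of_tendsto' hmin hbound fun n =>
    min_abs_mul_log_le hr0 hr1 (hp n) (hp (n + 1))

theorem mul_sub_log_nonneg {x y : ℝ} (hx : 0 < x) (hy : 0 < y) :
    0 ≤ (x - y) * (log x - log y) := by
  rcases le_total y x with h | h
  · exact mul_nonneg (sub_nonneg.mpr h) (sub_nonneg.mpr (log_le_log hy h))
  · exact mul_nonneg_of_nonpos_of_nonpos (sub_nonpos.mpr h) (sub_nonpos.mpr (log_le_log hx h))

section ExchangeFlux

variable {p : ℕ → ℝ}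

noncomputable def exchangeFlux (p : ℕ → ℝ) (n : ℕ) : ℝ := (1 - p 0) * p n - p (n + 1)

theorem Lop_zero (p : ℕ → ℝ) : Lop p 0 = -exchangeFlux p 0 := by
  simp only [Lop, exchangeFlux, ↓reduceIte]; ring

theorem Lop_succ (p : ℕ → ℝ) (n : ℕ) :
    Lop p (n + 1) = exchangeFlux p n - exchangeFlux p (n + 1) := by
  simp only [Lop, exchangeFlux, Nat.add_one_ne_zero, if_false, Nat.add_sub_cancel]; ring

theorem summable_exchangeFlux (hsum : Summable p) : Summable (exchangeFlux p) :=
  (hsum.mul_left _).sub ((summable_nat_add_iff 1).mpr hsum)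

theorem tsum_exchangeFlux (hsum : Summable p) (htot : ∑' n, p n = 1) :
    ∑' n, exchangeFlux p n = 0 := by
  have htail := hsum.tsum_eq_zero_add
  rw [htot] at htail
  unfold exchangeFlux
  rw [Summable.tsum_sub (hsum.mul_left _) ((summable_nat_add_iff 1).mpr hsum), tsum_mul_left, htot]
  linarith

theorem exchangeFlux_mul_log_sub (hpos : ∀ n, 0 < p n) (hr0 : 0 < 1 - p 0) (n : ℕ) :
    exchangeFlux p n * (log (p (n + 1)) - log (p n)) =
      log (1 - p 0) * exchangeFlux p n -
        exchangeFlux p n * (log ((1 - p 0) * p n) - log (p (n + 1))) := by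
  rw [log_mul hr0.ne' (hpos n).ne']; ring

end ExchangeFlux

theorem entropy_dissipation_general (p : ℕ → ℝ) (hpos : ∀ n, 0 < p n)
    (hsum : Summable p) (htot : ∑' n : ℕ, p n = 1)
    (hr0 : 0 < 1 - p 0)
    (habs1 : Summable (fun n : ℕ => |Lop p n * Real.log (p n)|))
    (habs2 : Summable (fun n : ℕ =>
      |((1 - p 0) * p n - p (n + 1)) * (Real.log ((1 - p 0) * p n) - Real.log (p (n + 1)))|)) :
    (∑' n : ℕ, Lop p n * Real.log (p n)
        = -∑' n : ℕ, ((1 - p 0) * p n - p (n + 1)) *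
            (Real.log ((1 - p 0) * p n) - Real.log (p (n + 1))))
      ∧ ∑' n : ℕ, Lop p n * Real.log (p n) ≤ 0 := by
  have hflux := summable_exchangeFlux hsum
  have hdiss : Summable fun n => exchangeFlux p n * (log ((1 - p 0) * p n) - log (p (n + 1))) :=
    habs2.of_abs
  have hau : Summable fun n => exchangeFlux p n * (log (p (n + 1)) - log (p n)) := by
    simpa only [exchangeFlux_mul_log_sub hpos hr0] using (hflux.mul_left _).sub hdiss
  have hparts : ∑' n, exchangeFlux p n * (log (p (n + 1)) - log (p n)) =
      -∑' n, exchangeFlux p n * (log ((1 - p 0) * p n) - log (p (n + 1))) := by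
    rw [tsum_congr (exchangeFlux_mul_log_sub hpos hr0), Summable.tsum_sub (hflux.mul_left _) hdiss,
      tsum_mul_left, tsum_exchangeFlux hsum htot, mul_zero, zero_sub]
  have hboundary : ∑' n, exchangeFlux p n * (log (p (n + 1)) - log (p n)) -
      ∑' n, Lop p n * log (p n) = 0 :=
    eq_zero_of_tendsto_flux_mul_log (fun n => (hpos n).le) hr0.le (by linarith [hpos 0])
      hsum.tendsto_atTop_zero (tendsto_flux_mul (Lop_zero p) (Lop_succ p) habs1.of_abs hau)
      (tendsto_flux_mul_succ (Lop_zero p) (Lop_succ p) habs1.of_abs hau)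
  have hidentity : ∑' n, Lop p n * log (p n) =
      -∑' n, exchangeFlux p n * (log ((1 - p 0) * p n) - log (p (n + 1))) := by
    linarith
  refine ⟨hidentity, hidentity ▸ neg_nonpos.mpr (tsum_nonneg fun n => ?_)⟩
  exact mul_sub_log_nonneg (mul_pos hr0 (hpos n)) (hpos (n + 1))

theorem entropy_dissipation (p : ℕ → ℝ) (hpos : ∀ n, 0 < p n)
    (hsum : Summable p) (htot : ∑' n : ℕ, p n = 1)
    (hmean : Summable (fun n : ℕ => (n : ℝ) * p n))
    (hr0 : 0 < 1 - p 0) (hr1 : 1 - p 0 < 1)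
    (habs1 : Summable (fun n : ℕ => |Lop p n * Real.log (p n)|))
    (habs2 : Summable (fun n : ℕ =>
      |((1 - p 0) * p n - p (n + 1)) * (Real.log ((1 - p 0) * p n) - Real.log (p (n + 1)))|)) :
    (∑' n : ℕ, Lop p n * Real.log (p n)
        = -∑' n : ℕ, ((1 - p 0) * p n - p (n + 1)) *
            (Real.log ((1 - p 0) * p n) - Real.log (p (n + 1))))
      ∧ ∑' n : ℕ, Lop p n * Real.log (p n) ≤ 0 :=
  entropy_dissipation_general p hpos hsum htot hr0 habs1 habs2
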